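/- arXiv:1505.08121 — 2 statements merged into one kernel-verified Lean document; each statement's English description precedes it below -/
import Mathlib

section
/- For every integer m ≥ 3, the lexicographic product C_m[4] admits a 2-factorization into four C_m-factors, i.e., four spanning subgraphs each of which is a vertex-disjoint union of four cycles of length m. -/
open SimpleGraph

/-- `F` is a decomposition of the graph `G` into edge-disjoint subgraphs. -/
def IsDecompositionF {V : Type*} {n : ℕ} (G : SimpleGraph V) (F : Fin n → SimpleGraph V) : Prop :=
  (∀ i, F i ≤ G) ∧ (∀ i j, i ≠ j → F i ⊓ F j = ⊥) ∧ (⨆ i, F i) = G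

/-- `H` is a `C_k`-factor of `G`: a spanning 2-regular subgraph all of whose
connected components have `k` vertices (hence are `k`-cycles). -/
def IsCnFactor {V : Type*} (G H : SimpleGraph V) (k : ℕ) : Prop :=
  H ≤ G ∧ (∀ v, (H.neighborSet v).ncard = 2) ∧
    ∀ v, (H.connectedComponentMk v).supp.ncard = k

/-- `H` is a perfect matching (1-factor) of `G`. -/
def IsPM {V : Type*} (G H : SimpleGraph V) : Prop :=
  H ≤ G ∧ ∀ v, (H.neighborSet v).ncard = 1

/-- The lexicographic blow-up `C_m[4]`: the Cayley graph on `ZMod 4 × ZMod m`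
with connection set `ZMod 4 × {1, -1}`. -/
def Cm4 (m : ℕ) : SimpleGraph (ZMod 4 × ZMod m) :=
  SimpleGraph.fromRel (fun u v => v.2 - u.2 = 1)

/-- The blow-up `G[k]`: replace every vertex by `k` independent vertices. -/
def blowup {V : Type*} (G : SimpleGraph V) (k : ℕ) : SimpleGraph (V × Fin k) where
  Adj u v := G.Adj u.1 v.1
  symm := ⟨by intro _ _ h; exact G.adj_symm h⟩
  loopless := ⟨by intro u h; exact G.irrefl h⟩

/-
Identify the blown-up vertices of each layer with `GaloisField 2 2`, and pick a proper colouring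
`p : ZMod m → 𝔽₄` of the cycle `C_m` (three colours suffice). For `c ∈ 𝔽₄` the factor `F_c` joins
`(x, i)` to `(y, i + 1)` when `y - p (i + 1) * c = x - p i * c`. Along `F_c` the potential
`x - p i * c` is constant and meets every layer exactly once, so the components of `F_c` are
`m`-cycles; and since `p (i + 1) - p i ≠ 0`, every edge `(x, i)(y, i + 1)` lies in exactly one
factor, namely the one with `c = (p (i + 1) - p i)⁻¹ * (y - x)`.
-/

section

variable {X A : Type*} {m : ℕ}

/-- `C_m[X]`: layers indexed by `ZMod m`, consecutive layers completely joined. -/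
def lexCycleGraph (X : Type*) (m : ℕ) : SimpleGraph (X × ZMod m) :=
  fromRel fun u v => v.2 - u.2 = 1

theorem cm4_eq_lexCycleGraph (m : ℕ) : Cm4 m = lexCycleGraph (ZMod 4) m := rfl

def levelGraph (e : ZMod m → X ≃ A) : SimpleGraph (X × ZMod m) :=
  fromRel fun u v => v.2 - u.2 = 1 ∧ e u.2 u.1 = e v.2 v.1

section levelGraph

variable (e : ZMod m → X ≃ A)

theorem levelGraph_le : levelGraph e ≤ lexCycleGraph X m :=
  fun _ _ h => ⟨h.1, h.2.imp And.left And.left⟩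

theorem levelGraph_reachable_of_succ {u v : X × ZMod m} (h : v.2 - u.2 = 1)
    (he : e u.2 u.1 = e v.2 v.1) : (levelGraph e).Reachable u v := by
  by_cases huv : u = v
  · exact huv ▸ Reachable.refl u
  · exact Adj.reachable ⟨huv, Or.inl ⟨h, he⟩⟩

theorem levelGraph_reachable_iff [NeZero m] {u v : X × ZMod m} :
    (levelGraph e).Reachable u v ↔ e u.2 u.1 = e v.2 v.1 := by
  constructor
  · rintro ⟨w⟩
    induction w with
    | nil => rfl
    | cons h _ ih => exact (h.2.elim (·.2) (·.2.symm)).trans ih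
  · intro huv
    have from_zero : ∀ (k : A) (n : ℕ),
        (levelGraph e).Reachable ((e 0).symm k, 0) ((e n).symm k, n) := by
      intro k n
      induction n with
      | zero => simp
      | succ n ih =>
        exact ih.trans <| levelGraph_reachable_of_succ e (by push_cast; ring) (by simp)
    have to_point : ∀ w : X × ZMod m,
        (levelGraph e).Reachable ((e 0).symm (e w.2 w.1), 0) w := by
      intro w
      simpa using from_zero (e w.2 w.1) w.2.val
    exact (to_point u).symm.trans (huv ▸ to_point v)

theorem supp_connectedComponentMk_levelGraph [NeZero m] (v : X × ZMod m) :
    ((levelGraph e).connectedComponentMk v).supp =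
      Set.range fun j => ((e j).symm (e v.2 v.1), j) := by
  ext w
  rw [ConnectedComponent.mem_supp_iff, ConnectedComponent.eq, levelGraph_reachable_iff]
  constructor
  · intro h
    exact ⟨w.2, by simp [← h]⟩
  · rintro ⟨j, rfl⟩
    simp

theorem neighborSet_levelGraph (h1 : (1 : ZMod m) ≠ 0) (u : X × ZMod m) :
    (levelGraph e).neighborSet u =
      {((e (u.2 + 1)).symm (e u.2 u.1), u.2 + 1), ((e (u.2 - 1)).symm (e u.2 u.1), u.2 - 1)} := by
  ext ⟨x, j⟩
  simp only [mem_neighborSet, levelGraph, fromRel_adj, Set.mem_insert_iff,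
    Set.mem_singleton_iff, Prod.ext_iff, Equiv.eq_symm_apply]
  constructor
  · rintro ⟨-, ⟨hj, hx⟩ | ⟨hj, hx⟩⟩
    · left
      obtain rfl : j = u.2 + 1 := by rw [← hj]; ring
      exact ⟨hx.symm, rfl⟩
    · right
      obtain rfl : j = u.2 - 1 := by rw [← hj]; ring
      exact ⟨hx, rfl⟩
  · rintro (⟨hx, rfl⟩ | ⟨hx, rfl⟩)
    · exact ⟨fun h => h1 (by linear_combination -congrArg Prod.snd h), Or.inl ⟨by ring, hx.symm⟩⟩
    · exact ⟨fun h => h1 (by linear_combination congrArg Prod.snd h), Or.inr ⟨by ring, hx⟩⟩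

theorem isCnFactor_levelGraph [NeZero m] (h2 : (2 : ZMod m) ≠ 0) :
    IsCnFactor (lexCycleGraph X m) (levelGraph e) m := by
  have h1 : (1 : ZMod m) ≠ 0 := fun h => h2 (by rw [← one_add_one_eq_two, h, add_zero])
  refine ⟨levelGraph_le e, fun u => ?_, fun v => ?_⟩
  · rw [neighborSet_levelGraph e h1, Set.ncard_pair]
    intro h
    exact h2 (by linear_combination congrArg Prod.snd h)
  · rw [supp_connectedComponentMk_levelGraph, Set.ncard_range_of_injective, Nat.card_zmod]
    exact fun i j h => congrArg Prod.snd h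

end levelGraph

section linearFactor

variable {F : Type*} [DivisionRing F] (e : X ≃ F) (p : ZMod m → F)

def linearFactor (c : F) : SimpleGraph (X × ZMod m) :=
  levelGraph fun j => e.trans (Equiv.subRight (p j * c))

theorem sub_mul_eq_sub_mul_iff {a b d₁ d₂ c : F} (hd : d₂ - d₁ ≠ 0) :
    a - d₁ * c = b - d₂ * c ↔ c = (d₂ - d₁)⁻¹ * (b - a) := by
  rw [eq_inv_mul_iff_mul_eq₀ hd, sub_mul, sub_eq_sub_iff_sub_eq_sub, ← neg_sub (d₁ * c),
    ← neg_sub a, neg_inj, eq_comm]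

variable {e p}

theorem sub_ne_zero_of_sub_eq_one (hp : ∀ i, p (i + 1) ≠ p i) {i j : ZMod m} (h : j - i = 1) :
    p j - p i ≠ 0 := by
  rw [sub_ne_zero, ← sub_add_cancel j i, h, add_comm]
  exact hp i

theorem linearFactor_inf_eq_bot (hp : ∀ i, p (i + 1) ≠ p i) (h2 : (2 : ZMod m) ≠ 0) {c c' : F}
    (hc : c ≠ c') : linearFactor e p c ⊓ linearFactor e p c' = ⊥ := by
  ext u v
  simp only [linearFactor, levelGraph, inf_adj, fromRel_adj, bot_adj, iff_false,
    Equiv.trans_apply, Equiv.subRight_apply]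
  rintro ⟨⟨-, h | h⟩, -, h' | h'⟩
  · rw [sub_mul_eq_sub_mul_iff (sub_ne_zero_of_sub_eq_one hp h.1)] at h h'
    exact hc (h.2.trans h'.2.symm)
  · exact h2 (by linear_combination -h.1 - h'.1)
  · exact h2 (by linear_combination -h.1 - h'.1)
  · rw [sub_mul_eq_sub_mul_iff (sub_ne_zero_of_sub_eq_one hp h.1)] at h h'
    exact hc (h.2.trans h'.2.symm)

theorem iSup_linearFactor (hp : ∀ i, p (i + 1) ≠ p i) :
    ⨆ c, linearFactor e p c = lexCycleGraph X m := by
  refine le_antisymm (iSup_le fun c => levelGraph_le _) fun u v ⟨huv, h⟩ => ?_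
  simp only [iSup_adj, linearFactor, levelGraph, fromRel_adj, Equiv.trans_apply,
    Equiv.subRight_apply]
  rcases h with h | h
  · exact ⟨_, huv, Or.inl ⟨h, (sub_mul_eq_sub_mul_iff (sub_ne_zero_of_sub_eq_one hp h)).2 rfl⟩⟩
  · exact ⟨_, huv, Or.inr ⟨h, (sub_mul_eq_sub_mul_iff (sub_ne_zero_of_sub_eq_one hp h)).2 rfl⟩⟩

theorem isDecompositionF_linearFactor {n : ℕ} (g : Fin n ≃ F) (hp : ∀ i, p (i + 1) ≠ p i)
    (h2 : (2 : ZMod m) ≠ 0) :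
    IsDecompositionF (lexCycleGraph X m) fun i => linearFactor e p (g i) :=
  ⟨fun _ => levelGraph_le _, fun _ _ hij => linearFactor_inf_eq_bot hp h2 (g.injective.ne hij),
    by rw [g.iSup_comp (g := linearFactor e p), iSup_linearFactor hp]⟩

end linearFactor

theorem exists_add_one_ne {α : Type*} (hm : 2 ≤ m) (f : Fin 3 ↪ α) :
    ∃ p : ZMod m → α, ∀ i, p (i + 1) ≠ p i := by
  obtain ⟨n, rfl⟩ : ∃ n, m = n + 2 := ⟨m - 2, by omega⟩
  -- `ZMod (n + 2)` is `Fin (n + 2)` by definition, the vertex type of `cycleGraph (n + 2)`.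
  let colouring := cycleGraph.tricoloring (n + 2) hm
  exact ⟨fun i => f (colouring i), fun i =>
    f.injective.ne (colouring.valid (cycleGraph_adj.2 (Or.inl (add_sub_cancel_left i 1))))⟩

end

/-- For every `m ≥ 3`, `C_m[4]` has a 2-factorization into four `C_m`-factors. -/
theorem stmt_2 (m : ℕ) (hm : 3 ≤ m) :
    ∃ F : Fin 4 → SimpleGraph (ZMod 4 × ZMod m),
      IsDecompositionF (Cm4 m) F ∧ ∀ i, IsCnFactor (Cm4 m) (F i) m := by
  have : NeZero m := ⟨by omega⟩
  have h2 : (2 : ZMod m) ≠ 0 := by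
    rw [← Nat.cast_ofNat, Ne, ZMod.natCast_eq_zero_iff]
    exact fun h => by have := Nat.le_of_dvd two_pos h; omega
  let g : Fin 4 ≃ GaloisField 2 2 :=
    (Finite.equivFinOfCardEq (by rw [GaloisField.card 2 2 two_ne_zero]; rfl)).symm
  obtain ⟨p, hp⟩ :=
    exists_add_one_ne (m := m) (by omega) ((Fin.castLEEmb (by norm_num)).trans g.toEmbedding)
  rw [cm4_eq_lexCycleGraph]
  -- `ZMod 4` is `Fin 4` by definition, so `g` also labels the vertices of a layer.
  exact ⟨fun i => linearFactor (m := m) g p (g i), isDecompositionF_linearFactor g hp h2,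
    fun i => isCnFactor_levelGraph _ h2⟩
end

section
/- For every odd integer m ≥ 3, the graph C_m[4] admits no 2-factorization consisting of one C_4-factor and three C_m-factors. That is, one cannot partition the edges of C_m[4] into three spanning subgraphs each a disjoint union of four m-cycles together with one spanning subgraph that is a disjoint union of m 4-cycles. -/
open SimpleGraph

/-!
Every edge of `C_m[4]` joins layers `i` and `i + 1` for some `i`; count it as an up-edge at its
endpoint in layer `i`. In a 2-regular subgraph, the numbers of up-edges leaving two consecutive
layers of a component have even sum, namely twice the size of the layer between them. For a
component with `m` vertices, `m` odd, these `m` numbers sum to `m`, so they are all odd and hence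
all equal to `1`; then every layer of the component is a single vertex, of up-degree `1`. Every
vertex of `C_m[4]` has up-degree `4`, so in the remaining `C_4`-factor every vertex has up-degree
`1` as well. Then each component of that factor meets all layers in equally many vertices, so
`m ∣ 4`, which is impossible for odd `m ≥ 3`.
-/

open Finset

theorem ZMod.apply_eq_apply_zero_of_forall_add_one {m : ℕ} [NeZero m] {β : Type*}
    {f : ZMod m → β} (h : ∀ i, f (i + 1) = f i) (i : ZMod m) : f i = f 0 := by
  rw [← ZMod.natCast_zmod_val i]
  induction i.val with
  | zero => simp
  | succ k ih => rw [Nat.cast_succ, h, ih]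

theorem ZMod.eq_one_of_even_add_of_sum_eq {m : ℕ} [NeZero m] (hmo : Odd m) {e : ZMod m → ℕ}
    (heven : ∀ i, Even (e i + e (i + 1))) (hsum : ∑ i, e i = m) (i : ZMod m) : e i = 1 := by
  have hpar : ∀ i, e i % 2 = e 0 % 2 :=
    ZMod.apply_eq_apply_zero_of_forall_add_one (f := (e · % 2)) fun i ↦ by
      have := Nat.even_iff.1 (heven i)
      omega
  have hodd : e 0 % 2 = 1 := by
    by_contra h
    have : 2 ∣ ∑ i, e i :=
      dvd_sum fun i _ ↦ Nat.dvd_of_mod_eq_zero (by have := hpar i; omega)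
    exact Nat.not_even_iff_odd.2 hmo (even_iff_two_dvd.2 (hsum ▸ this))
  have hpos : ∀ i, 1 ≤ e i := fun i ↦ by have := hpar i; omega
  have hsum1 : ∑ i, e i = ∑ _i : ZMod m, 1 := by simp [hsum]
  exact ((sum_eq_sum_iff_of_le fun i _ ↦ hpos i).1 hsum1.symm i (mem_univ i)).symm

theorem ZMod.two_ne_zero_of_two_lt {m : ℕ} (hm : 2 < m) : (2 : ZMod m) ≠ 0 := by
  exact_mod_cast (ZMod.natCast_eq_zero_iff 2 m).not.2 (Nat.not_dvd_of_pos_of_lt two_pos hm)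

namespace CycleLayers

open scoped Classical

variable {α : Type*} {m : ℕ}

def IsLayered (H : SimpleGraph (α × ZMod m)) : Prop :=
  ∀ ⦃v w⦄, H.Adj v w → w.2 = v.2 + 1 ∨ v.2 = w.2 + 1

theorem IsLayered.mono {G H : SimpleGraph (α × ZMod m)} (hG : IsLayered G) (hHG : H ≤ G) :
    IsLayered H :=
  fun _ _ h ↦ hG (hHG h)

theorem isLayered_cm4 : IsLayered (Cm4 m) := by
  rintro v w ⟨-, h | h⟩
  · exact .inl (eq_add_of_sub_eq' h)
  · exact .inr (eq_add_of_sub_eq' h)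

variable [Fintype α] [NeZero m]

noncomputable def upDegree (H : SimpleGraph (α × ZMod m)) (v : α × ZMod m) : ℕ :=
  #{w | H.Adj v w ∧ w.2 = v.2 + 1}

noncomputable def downDegree (H : SimpleGraph (α × ZMod m)) (v : α × ZMod m) : ℕ :=
  #{w | H.Adj v w ∧ v.2 = w.2 + 1}

variable {H : SimpleGraph (α × ZMod m)}

theorem IsLayered.upDegree_add_downDegree (hm : 2 < m) (hH : IsLayered H) (v : α × ZMod m) :
    upDegree H v + downDegree H v = (H.neighborSet v).ncard := by
  have hdisj : Disjoint ({w | H.Adj v w ∧ w.2 = v.2 + 1} : Finset _)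
      ({w | H.Adj v w ∧ v.2 = w.2 + 1} : Finset _) := by
    refine disjoint_filter.2 fun w _ hup hdown ↦ ZMod.two_ne_zero_of_two_lt hm ?_
    linear_combination -hup.2 - hdown.2
  rw [upDegree, downDegree, ← card_union_of_disjoint hdisj, ← filter_or,
    ← Set.ncard_coe_finset]
  congr 1
  ext w
  simpa [← and_or_left] using fun h ↦ hH h

theorem upDegree_cm4 (hm : 1 < m) (v : ZMod 4 × ZMod m) : upDegree (Cm4 m) v = 4 := by
  have : ({w | (Cm4 m).Adj v w ∧ w.2 = v.2 + 1} : Finset _) = univ ×ˢ {v.2 + 1} := by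
    ext w
    simp only [Cm4, fromRel_adj, mem_filter, mem_univ, true_and, mem_product, mem_singleton]
    refine ⟨And.right, fun h ↦ ⟨⟨?_, .inl (by rw [h]; ring)⟩, h⟩⟩
    rintro rfl
    have : Fact (1 < m) := ⟨hm⟩
    simp at h
  rw [upDegree, this, card_product, card_singleton, card_univ, ZMod.card]

theorem upDegree_eq_sum_of_isDecompositionF {n : ℕ} {G : SimpleGraph (α × ZMod m)}
    {F : Fin n → SimpleGraph (α × ZMod m)} (hF : IsDecompositionF G F) (v : α × ZMod m) :
    upDegree G v = ∑ t, upDegree (F t) v := by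
  obtain ⟨-, hdisj, hsup⟩ := hF
  have : ({w | G.Adj v w ∧ w.2 = v.2 + 1} : Finset _) =
      univ.biUnion fun t ↦ {w | (F t).Adj v w ∧ w.2 = v.2 + 1} := by
    ext w
    simp [← hsup]
  rw [upDegree, this, card_biUnion]
  · rfl
  intro s _ t _ hst
  refine disjoint_filter.2 fun w _ hs ht ↦ ?_
  simpa [hdisj s t hst] using (show (F s ⊓ F t).Adj v w from ⟨hs.1, ht.1⟩)

noncomputable def layer (C : H.ConnectedComponent) (i : ZMod m) : Finset (α × ZMod m) :=
  {v | v ∈ C.supp ∧ v.2 = i}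

theorem sum_card_layer (C : H.ConnectedComponent) : ∑ i, #(layer C i) = C.supp.ncard := by
  rw [Set.ncard_eq_toFinset_card',
    card_eq_sum_card_fiberwise (f := Prod.snd) (t := univ) fun _ _ ↦ mem_coe.2 (mem_univ _)]
  refine sum_congr rfl fun i _ ↦ congrArg card ?_
  ext v
  simp [layer]

theorem sum_upDegree_layer (C : H.ConnectedComponent) (i : ZMod m) :
    ∑ v ∈ layer C i, upDegree H v = ∑ w ∈ layer C (i + 1), downDegree H w := by
  have hup : ∀ v ∈ layer C i, upDegree H v = #((layer C (i + 1)).bipartiteAbove H.Adj v) := by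
    intro v hv
    simp only [layer, mem_filter, mem_univ, true_and] at hv
    refine congrArg card (ext fun w ↦ ?_)
    simp only [bipartiteAbove, layer, mem_filter, mem_univ, true_and]
    refine ⟨fun h ↦ ⟨⟨C.mem_supp_of_adj_mem_supp hv.1 h.1, by rw [h.2, hv.2]⟩, h.1⟩,
      fun h ↦ ⟨h.2, by rw [h.1.2, hv.2]⟩⟩
  have hdown : ∀ w ∈ layer C (i + 1), downDegree H w = #((layer C i).bipartiteBelow H.Adj w) := by
    intro w hw
    simp only [layer, mem_filter, mem_univ, true_and] at hw
    refine congrArg card (ext fun v ↦ ?_)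
    simp only [bipartiteBelow, layer, mem_filter, mem_univ, true_and]
    refine ⟨fun h ↦ ⟨⟨C.mem_supp_of_adj_mem_supp hw.1 h.1, add_right_cancel (h.2 ▸ hw.2)⟩,
      h.1.symm⟩, fun h ↦ ⟨h.2.symm, by rw [h.1.2, hw.2]⟩⟩
  rw [sum_congr rfl hup, sum_congr rfl hdown]
  exact sum_card_bipartiteAbove_eq_sum_card_bipartiteBelow _

section TwoRegular

variable (hm : 2 < m) (hH : IsLayered H) (hreg : ∀ v, (H.neighborSet v).ncard = 2)
include hm hH hreg

theorem sum_upDegree_layer_add (C : H.ConnectedComponent) (i : ZMod m) :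
    ∑ v ∈ layer C i, upDegree H v + ∑ v ∈ layer C (i + 1), upDegree H v =
      2 * #(layer C (i + 1)) := by
  rw [sum_upDegree_layer, ← sum_add_distrib,
    sum_congr rfl fun v _ ↦ by rw [add_comm, hH.upDegree_add_downDegree hm, hreg],
    sum_const, smul_eq_mul, mul_comm]

theorem sum_sum_upDegree_layer (C : H.ConnectedComponent) :
    ∑ i, ∑ v ∈ layer C i, upDegree H v = C.supp.ncard := by
  have h2 : ∑ i, (∑ v ∈ layer C i, upDegree H v + ∑ v ∈ layer C (i + 1), upDegree H v) =
      ∑ i, 2 * #(layer C (i + 1)) :=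
    sum_congr rfl fun i _ ↦ sum_upDegree_layer_add hm hH hreg C i
  have hshift (f : ZMod m → ℕ) : ∑ i, f (i + 1) = ∑ i, f i := Equiv.sum_comp (Equiv.addRight 1) f
  rw [sum_add_distrib, ← mul_sum, hshift fun i ↦ ∑ v ∈ layer C i, upDegree H v,
    hshift fun i ↦ #(layer C i), sum_card_layer] at h2
  omega

theorem upDegree_eq_one_of_ncard_supp_eq (hmo : Odd m) {v : α × ZMod m}
    (hv : (H.connectedComponentMk v).supp.ncard = m) : upDegree H v = 1 := by
  set C := H.connectedComponentMk v
  have he : ∀ i, ∑ w ∈ layer C i, upDegree H w = 1 :=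
    ZMod.eq_one_of_even_add_of_sum_eq hmo
      (fun i ↦ ⟨_, (sum_upDegree_layer_add hm hH hreg C i).trans (two_mul _)⟩)
      (by rw [sum_sum_upDegree_layer hm hH hreg, hv])
  have hlayer : layer C v.2 = {v} := by
    have hcard := sum_upDegree_layer_add hm hH hreg C (v.2 - 1)
    rw [sub_add_cancel, he, he] at hcard
    obtain ⟨w, hw⟩ := card_eq_one.1 (by omega : #(layer C v.2) = 1)
    have hv : v ∈ layer C v.2 := by simp [layer, C]
    rw [hw, mem_singleton] at hv
    rw [hw, hv]
  simpa [hlayer] using he v.2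

theorem dvd_ncard_supp_of_upDegree_eq_one (hup : ∀ v, upDegree H v = 1)
    (C : H.ConnectedComponent) : m ∣ C.supp.ncard := by
  have hcard : ∀ i, ∑ v ∈ layer C i, upDegree H v = #(layer C i) := by simp [hup]
  have hstep : ∀ i, #(layer C (i + 1)) = #(layer C i) := fun i ↦ by
    have := sum_upDegree_layer_add hm hH hreg C i
    rw [hcard, hcard] at this
    omega
  refine ⟨#(layer C 0), ?_⟩
  rw [← sum_card_layer, sum_congr rfl fun i _ ↦
    ZMod.apply_eq_apply_zero_of_forall_add_one (f := fun i ↦ #(layer C i)) hstep i,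
    sum_const, card_univ, ZMod.card, smul_eq_mul]

end TwoRegular

end CycleLayers

open CycleLayers in
/-- For odd `m ≥ 3`, `C_m[4]` has no 2-factorization into one `C_4`-factor and
three `C_m`-factors. -/
theorem stmt_4 (m : ℕ) (hm : 3 ≤ m) (hmo : Odd m) :
    ¬ ∃ F : Fin 4 → SimpleGraph (ZMod 4 × ZMod m),
        IsDecompositionF (Cm4 m) F ∧
        IsCnFactor (Cm4 m) (F 0) 4 ∧
        IsCnFactor (Cm4 m) (F 1) m ∧ IsCnFactor (Cm4 m) (F 2) m ∧
        IsCnFactor (Cm4 m) (F 3) m := by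
  have : NeZero m := ⟨by omega⟩
  rintro ⟨F, hF, h0, h1, h2, h3⟩
  have hupm {H} (hH : IsCnFactor (Cm4 m) H m) (v) : upDegree H v = 1 :=
    upDegree_eq_one_of_ncard_supp_eq hm (isLayered_cm4.mono hH.1) hH.2.1 hmo (hH.2.2 v)
  have hup0 : ∀ v, upDegree (F 0) v = 1 := fun v ↦ by
    have := upDegree_eq_sum_of_isDecompositionF hF v
    rw [upDegree_cm4 (by omega), Fin.sum_univ_four, hupm h1, hupm h2, hupm h3] at this
    omega
  have hdvd : m ∣ 4 := h0.2.2 (0, 0) ▸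
    dvd_ncard_supp_of_upDegree_eq_one hm (isLayered_cm4.mono h0.1) h0.2.1 hup0 _
  have := Nat.le_of_dvd four_pos hdvd
  interval_cases m
  · norm_num at hdvd
  · exact Nat.not_odd_iff_even.2 (by decide) hmo
end
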